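/- arXiv:2112.04670 — 2 statements merged into one kernel-verified Lean document; each statement's English description precedes it below -/
import Mathlib

section
/- Let X be a Banach space, Z a closed subspace of X, E : Z → X the natural isometric embedding, and E* : X* → Z* the adjoint quotient map sending each functional to its restriction to Z. Let A ⊆ Z* and D := (E*)^{-1}(A). Then for every ordinal α, D^{(α)} = (E*)^{-1}(A^{(α)}), where the derived set D^{(α)} is taken in X* and the derived set A^{(α)} in Z*. -/
open Set Filter Topology

noncomputable section

namespace Paper

/-- `y` is an up-neighbor of `x` within the subforest `S`: both belong to `S`, `x < y`,
and no vertex of `S` lies strictly between them. -/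
def UpNbrIn {P : Type*} [PartialOrder P] (S : Set P) (x y : P) : Prop :=
  x ∈ S ∧ y ∈ S ∧ x < y ∧ ∀ z ∈ S, ¬(x < z ∧ z < y)

/-- `x` is a terminal vertex of the subforest `S`: it has no up-neighbors within `S`. -/
def TerminalIn {P : Type*} [PartialOrder P] (S : Set P) (x : P) : Prop :=
  x ∈ S ∧ ∀ y, ¬UpNbrIn S x y

/-- One step of the derived forest operation: delete every terminal vertex whose
down-neighbor has infinitely many terminal up-neighbors. -/
def derStep {P : Type*} [PartialOrder P] (S : Set P) : Set P :=
  S \ {x | TerminalIn S x ∧ ∃ u, UpNbrIn S u x ∧ {y | UpNbrIn S u y ∧ TerminalIn S y}.Infinite}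

/-- Transfinite iteration of the derived forest operation: `derIter S β = S^{(β)}`,
with intersections at limit stages. -/
def derIter {P : Type*} [PartialOrder P] (S : Set P) (β : Ordinal) : Set P :=
  Ordinal.limitRecOn β S (fun _ T => derStep T)
    (fun β _ ih => ⋂ (γ : Ordinal), ⋂ (h : γ < β), ih γ h)

/-- Weak* closure of a set in the dual of a real normed space. -/
def wcl {Z : Type*} [NormedAddCommGroup Z] [NormedSpace ℝ Z]
    (A : Set (StrongDual ℝ Z)) : Set (StrongDual ℝ Z) :=
  StrongDual.toWeakDual ⁻¹' closure (StrongDual.toWeakDual '' A)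

/-- The weak* derived set `A^{(1)} = ⋃ₙ weak*-closure (A ∩ n B_{Z*})`. -/
def derSet {Z : Type*} [NormedAddCommGroup Z] [NormedSpace ℝ Z]
    (A : Set (StrongDual ℝ Z)) : Set (StrongDual ℝ Z) :=
  ⋃ n : ℕ, wcl (A ∩ {f | ‖f‖ ≤ (n : ℝ)})

/-- Transfinite weak* derived sets: `A^{(0)} = A`, `A^{(β+1)} = (A^{(β)})^{(1)}`, and
`A^{(β)} = ⋃_{γ<β} A^{(γ)}` at limit stages. -/
def derSetIter {Z : Type*} [NormedAddCommGroup Z] [NormedSpace ℝ Z]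
    (A : Set (StrongDual ℝ Z)) (α : Ordinal) : Set (StrongDual ℝ Z) :=
  Ordinal.limitRecOn α A (fun _ T => derSet T)
    (fun α _ ih => ⋃ (β : Ordinal), ⋃ (h : β < α), ih β h)

/-- The coefficient attached to a vertex `u` of the forest: the label of its down-neighbor,
or the label of `u` itself when `u` is an initial vertex (`n₀ = n₁`). -/
def coefN {P : Type*} [PartialOrder P] (e : P → ℕ) (u : P) : ℕ :=
  letI := Classical.dec (∃ w, w ⋖ u)
  if h : ∃ w, w ⋖ u then e h.choose else e u

/-- The vector `z*(v)` shortened to the subforest `S`: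
`∑_{u ≤ v, u ∈ S} n_{i-1} z*_{n_i}`. -/
def shortVec {P : Type*} [PartialOrder P] {Z : Type*} [NormedAddCommGroup Z] [NormedSpace ℝ Z]
    (e : P → ℕ) (zs : ℕ → StrongDual ℝ Z) (S : Set P) (v : P) : StrongDual ℝ Z :=
  ∑ᶠ u ∈ ({w | w ≤ v} ∩ S), (coefN e u : ℝ) • zs (e u)

/-- The shortening `X^β` of the set `X_α` to the subforest `S` (for `S = (F_α)^β`);
for `S = univ` this is `X_α` itself. -/
def XsetOf {P : Type*} [PartialOrder P] {Z : Type*} [NormedAddCommGroup Z] [NormedSpace ℝ Z]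
    (e : P → ℕ) (zs : ℕ → StrongDual ℝ Z) (S : Set P) : Set (StrongDual ℝ Z) :=
  {x | ∃ v : P, (¬∃ y, v ⋖ y) ∧ x = shortVec e zs S v}

/-- The largest index in the support of a vector of `X^β` (read off by evaluating
against the basic sequence); it is the label of the vertex `v(x)`. -/
def topIdx {Z : Type*} [NormedAddCommGroup Z] [NormedSpace ℝ Z]
    (z : ℕ → Z) (x : StrongDual ℝ Z) : ℕ :=
  sSup {n | x (z n) ≠ 0}

/-- The vector `y(x)`: `x` with the coordinate at its top vertex `v(x)` replaced by `0`. -/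
def truncTop {Z : Type*} [NormedAddCommGroup Z] [NormedSpace ℝ Z]
    (z : ℕ → Z) (zs : ℕ → StrongDual ℝ Z) (x : StrongDual ℝ Z) :
    StrongDual ℝ Z :=
  x - x (z (topIdx z x)) • zs (topIdx z x)

/-!
Restriction `f ↦ f|_Z` is weak*-continuous and does not increase norms, which gives
`D^{(1)} ⊆ (E*)⁻¹ A^{(1)}`. Conversely, if `x|_Z` is a weak* limit of a bounded net in `A`, then by
Hahn–Banach that net lifts to a net in `D` with the same bound, and by Banach–Alaoglu the lifted net
has a weak* cluster point `f` with `f|_Z = x|_Z`. Translating by `x - f`, which vanishes on `Z`,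
keeps the net inside `D` and bounded and moves `f` to `x`, so `x ∈ D^{(1)}`. The transfinite
statement follows by induction, since preimages commute with unions.
-/

section WeakStarClosure

variable {E F : Type*} [NormedAddCommGroup E] [NormedSpace ℝ E]
  [NormedAddCommGroup F] [NormedSpace ℝ F]

lemma continuous_toWeakDual_comp (T : E →L[ℝ] F) :
    Continuous fun f : WeakDual ℝ F => StrongDual.toWeakDual ((WeakDual.toStrongDual f).comp T) :=
  WeakDual.continuous_of_continuous_eval fun x => WeakDual.eval_continuous (T x)

lemma wcl_mono {S T : Set (StrongDual ℝ E)} (h : S ⊆ T) : wcl S ⊆ wcl T :=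
  preimage_mono (closure_mono (image_mono h))

lemma comp_mem_wcl {S : Set (StrongDual ℝ F)} {f : StrongDual ℝ F} (hf : f ∈ wcl S)
    (T : E →L[ℝ] F) : f.comp T ∈ wcl ((fun g : StrongDual ℝ F => g.comp T) '' S) :=
  map_mem_closure (f := fun h : WeakDual ℝ F =>
      StrongDual.toWeakDual ((WeakDual.toStrongDual h).comp T))
    (continuous_toWeakDual_comp T) hf <| by
    rintro _ ⟨g, hg, rfl⟩
    exact mem_image_of_mem _ (mem_image_of_mem _ hg)

lemma add_mem_wcl {S : Set (StrongDual ℝ E)} {f : StrongDual ℝ E} (hf : f ∈ wcl S)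
    (c : StrongDual ℝ E) : c + f ∈ wcl ((c + ·) '' S) :=
  map_mem_closure (f := fun h : WeakDual ℝ E => StrongDual.toWeakDual c + h)
    (continuous_const.add continuous_id) hf <| by
    rintro _ ⟨g, hg, rfl⟩
    exact mem_image_of_mem _ (mem_image_of_mem _ hg)

lemma closure_toWeakDual_image_subset_closedBall {S : Set (StrongDual ℝ E)} {r : ℝ}
    (hS : ∀ f ∈ S, ‖f‖ ≤ r) :
    closure (StrongDual.toWeakDual '' S) ⊆ WeakDual.toStrongDual ⁻¹' Metric.closedBall 0 r := by
  refine closure_minimal ?_ (WeakDual.isClosed_closedBall 0 r)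
  rintro _ ⟨g, hg, rfl⟩
  simpa using hS g hg

lemma norm_le_of_mem_wcl {S : Set (StrongDual ℝ E)} {r : ℝ} (hS : ∀ f ∈ S, ‖f‖ ≤ r)
    {f : StrongDual ℝ E} (hf : f ∈ wcl S) : ‖f‖ ≤ r :=
  mem_closedBall_zero_iff.mp (closure_toWeakDual_image_subset_closedBall hS hf)

end WeakStarClosure

section Restriction

variable {X : Type*} [NormedAddCommGroup X] [NormedSpace ℝ X] {Z : Submodule ℝ X}

lemma norm_comp_subtypeL_le (f : StrongDual ℝ X) : ‖f.comp Z.subtypeL‖ ≤ ‖f‖ :=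
  (f.opNorm_comp_le _).trans (mul_le_of_le_one_right (norm_nonneg f) (Z.norm_subtypeL_le))

lemma exists_comp_subtypeL_eq_of_mem_wcl {A : Set (StrongDual ℝ Z)} {r : ℝ}
    {g : StrongDual ℝ Z} (hg : g ∈ wcl (A ∩ {f | ‖f‖ ≤ r})) :
    ∃ f ∈ wcl ((fun f : StrongDual ℝ X => f.comp Z.subtypeL) ⁻¹' A ∩ {f | ‖f‖ ≤ r}),
      f.comp Z.subtypeL = g := by
  set S := (fun f : StrongDual ℝ X => f.comp Z.subtypeL) ⁻¹' A ∩ {f | ‖f‖ ≤ r}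
  set ρ := fun f : WeakDual ℝ X =>
    StrongDual.toWeakDual ((WeakDual.toStrongDual f).comp Z.subtypeL)
  have hcompact : IsCompact (ρ '' closure (StrongDual.toWeakDual '' S)) :=
    ((WeakDual.isCompact_closedBall 0 r).of_isClosed_subset isClosed_closure
      (closure_toWeakDual_image_subset_closedBall fun f hf => hf.2)).image
      (continuous_toWeakDual_comp _)
  have hlift : StrongDual.toWeakDual '' (A ∩ {f | ‖f‖ ≤ r}) ⊆
      ρ '' closure (StrongDual.toWeakDual '' S) := by
    rintro _ ⟨h, ⟨hA, hr⟩, rfl⟩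
    obtain ⟨f, hfh, hf⟩ := exists_extension_norm_eq Z h
    have hres : f.comp Z.subtypeL = h := ContinuousLinearMap.ext hfh
    refine ⟨StrongDual.toWeakDual f, subset_closure ⟨f, ⟨?_, ?_⟩, rfl⟩, ?_⟩
    · simpa only [mem_preimage, hres] using hA
    · exact hf.trans_le hr
    · simp only [ρ, StrongDual.toStrongDual_toWeakDual, hres]
  obtain ⟨f, hf, hfg⟩ := closure_minimal hlift hcompact.isClosed hg
  exact ⟨WeakDual.toStrongDual f, hf, hfg⟩

lemma mem_wcl_of_comp_subtypeL_mem_wcl {A : Set (StrongDual ℝ Z)} {r : ℝ} {x : StrongDual ℝ X}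
    (hx : x.comp Z.subtypeL ∈ wcl (A ∩ {f | ‖f‖ ≤ r})) :
    x ∈ wcl ((fun f : StrongDual ℝ X => f.comp Z.subtypeL) ⁻¹' A ∩ {f | ‖f‖ ≤ ‖x‖ + 2 * r}) := by
  obtain ⟨f, hf, hfx⟩ := exists_comp_subtypeL_eq_of_mem_wcl hx
  have hfr : ‖f‖ ≤ r := norm_le_of_mem_wcl (fun g hg => hg.2) hf
  have hxf : x - f + f ∈ wcl ((x - f + ·) '' _) := add_mem_wcl hf (x - f)
  rw [sub_add_cancel] at hxf
  refine wcl_mono ?_ hxf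
  rintro _ ⟨g, ⟨hgA, hgr : ‖g‖ ≤ r⟩, rfl⟩
  refine ⟨?_, ?_⟩
  · simpa [ContinuousLinearMap.add_comp, ContinuousLinearMap.sub_comp, hfx] using hgA
  · calc ‖x - f + g‖ ≤ ‖x‖ + ‖f‖ + ‖g‖ := (norm_add_le _ _).trans (by gcongr; exact norm_sub_le _ _)
      _ ≤ ‖x‖ + 2 * r := by linarith

lemma derSet_preimage_comp_subtypeL (A : Set (StrongDual ℝ Z)) :
    derSet ((fun f : StrongDual ℝ X => f.comp Z.subtypeL) ⁻¹' A)
      = (fun f : StrongDual ℝ X => f.comp Z.subtypeL) ⁻¹' derSet A := by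
  ext x
  simp only [derSet, mem_iUnion, mem_preimage]
  constructor
  · rintro ⟨n, hx⟩
    refine ⟨n, wcl_mono ?_ (comp_mem_wcl hx Z.subtypeL)⟩
    rintro _ ⟨f, ⟨hfA, hfn⟩, rfl⟩
    exact ⟨hfA, (norm_comp_subtypeL_le f).trans hfn⟩
  · rintro ⟨n, hx⟩
    refine ⟨⌈‖x‖⌉₊ + 2 * n, wcl_mono ?_ (mem_wcl_of_comp_subtypeL_mem_wcl hx)⟩
    refine inter_subset_inter_right _ fun f (hf : ‖f‖ ≤ ‖x‖ + 2 * n) => ?_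
    show ‖f‖ ≤ ((⌈‖x‖⌉₊ + 2 * n : ℕ) : ℝ)
    push_cast
    linarith [Nat.le_ceil ‖x‖]

end Restriction

section DerivedSetIteration

variable {E : Type*} [NormedAddCommGroup E] [NormedSpace ℝ E]

lemma derSetIter_zero (A : Set (StrongDual ℝ E)) : derSetIter A 0 = A :=
  Ordinal.limitRecOn_zero _ _ _

lemma derSetIter_add_one (A : Set (StrongDual ℝ E)) (β : Ordinal) :
    derSetIter A (β + 1) = derSet (derSetIter A β) :=
  Ordinal.limitRecOn_add_one _ _ _ _

lemma derSetIter_limit (A : Set (StrongDual ℝ E)) {β : Ordinal} (hβ : Order.IsSuccLimit β) :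
    derSetIter A β = ⋃ γ < β, derSetIter A γ :=
  Ordinal.limitRecOn_limit _ _ _ _ hβ

end DerivedSetIteration

theorem statement2_general {X : Type*} [NormedAddCommGroup X] [NormedSpace ℝ X]
    (Z : Submodule ℝ X)
    (A : Set (StrongDual ℝ ↥Z)) (α : Ordinal) :
    derSetIter ((fun f : StrongDual ℝ X => f.comp Z.subtypeL) ⁻¹' A) α
      = (fun f : StrongDual ℝ X => f.comp Z.subtypeL) ⁻¹' derSetIter A α := by
  induction α using Ordinal.limitRecOn with
  | zero => rw [derSetIter_zero, derSetIter_zero]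
  | add_one β ih =>
    rw [derSetIter_add_one, derSetIter_add_one, ih, derSet_preimage_comp_subtypeL]
  | limit β hβ ih =>
    rw [derSetIter_limit _ hβ, derSetIter_limit _ hβ]
    simp only [preimage_iUnion]
    exact iUnion₂_congr ih

theorem statement2 {X : Type*} [NormedAddCommGroup X] [NormedSpace ℝ X] [CompleteSpace X]
    (Z : Submodule ℝ X) (hZ : IsClosed (Z : Set X))
    (A : Set (StrongDual ℝ ↥Z)) (α : Ordinal) :
    derSetIter ((fun f : StrongDual ℝ X => f.comp Z.subtypeL) ⁻¹' A) α
      = (fun f : StrongDual ℝ X => f.comp Z.subtypeL) ⁻¹' derSetIter A α :=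
  statement2_general Z A α

end Paper
end
end

section
/- For all finite ordinals n and k with 1 ≤ k ≤ n, the derived forest of order k of F_n is isomorphic (as a partially ordered set, equivalently as a forest) to F_{n−k}: (F_n)^k = F_{n−k}. -/
open Set Filter Topology

noncomputable section

namespace Paper

/-!
In `F_{m+1}`, a root below `ℵ₀` copies of `F_m`, a vertex of a copy is deleted by one derivation
step iff it is deleted inside `F_m`, or it is a minimal terminal vertex of `F_m`: its
down-neighbour is then the root, which has infinitely many terminal up-neighbours, namely the
copies of that vertex. For `m ≥ 1` the only minimal vertex of `F_m` is its root, which is not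
terminal, so `(F_{m+1})'` is a root below `ℵ₀` copies of `(F_m)' ≅ F_{m-1}`, that is `F_m`.
For `m = 0` every vertex above the root of `F_1` is minimal and terminal in its copy, so `(F_1)'`
is a single vertex. Derived forests are invariant under order isomorphisms, so iterating gives
`(F_n)^k ≅ F_{n-k}`.
-/

section Covers

variable {P : Type*} [PartialOrder P]

def IsTerminal (x : P) : Prop := ∀ y, ¬x ⋖ y

def IsDeleted (x : P) : Prop :=
  IsTerminal x ∧ ∃ u, u ⋖ x ∧ {y | u ⋖ y ∧ IsTerminal y}.Infinite

lemma not_isDeleted_of_isMin {x : P} (hx : IsMin x) : ¬IsDeleted x :=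
  fun ⟨_, _, hux, _⟩ => hx.not_lt hux.lt

lemma isTerminal_apply_iff {Q : Type*} [PartialOrder Q] (e : P ≃o Q) (x : P) :
    IsTerminal (e x) ↔ IsTerminal x := by
  simp only [IsTerminal, e.surjective.forall, apply_covBy_apply_iff]

lemma isDeleted_apply_iff {Q : Type*} [PartialOrder Q] (e : P ≃o Q) (x : P) :
    IsDeleted (e x) ↔ IsDeleted x := by
  have himage (u : P) : {y | e u ⋖ y ∧ IsTerminal y} = e '' {y | u ⋖ y ∧ IsTerminal y} := by
    ext y
    obtain ⟨y, rfl⟩ := e.surjective y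
    simp [apply_covBy_apply_iff, isTerminal_apply_iff e]
  simp only [IsDeleted, isTerminal_apply_iff e, e.surjective.exists, apply_covBy_apply_iff,
    himage, Set.infinite_image_iff e.injective.injOn]

variable {S : Set P}

lemma upNbrIn_coe_iff (x y : S) : UpNbrIn S x y ↔ x ⋖ y := by
  simp only [UpNbrIn, CovBy, Subtype.coe_prop, true_and, Subtype.forall, ← Subtype.coe_lt_coe,
    not_and]

lemma terminalIn_coe_iff (x : S) : TerminalIn S x ↔ IsTerminal x := by
  refine ⟨fun h y hy => h.2 y ((upNbrIn_coe_iff x y).2 hy), fun h => ⟨x.2, fun y hy => ?_⟩⟩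
  exact h ⟨y, hy.2.1⟩ ((upNbrIn_coe_iff x ⟨y, hy.2.1⟩).1 hy)

lemma mem_derStep_iff (x : S) : ↑x ∈ derStep S ↔ ¬IsDeleted x := by
  have hset (u : S) : {y | UpNbrIn S u y ∧ TerminalIn S y} =
      Subtype.val '' {y : S | u ⋖ y ∧ IsTerminal y} := by
    ext y
    constructor
    · rintro ⟨hy, hterm⟩
      exact ⟨⟨y, hy.2.1⟩, ⟨(upNbrIn_coe_iff u ⟨y, hy.2.1⟩).1 hy,
        (terminalIn_coe_iff ⟨y, hy.2.1⟩).1 hterm⟩, rfl⟩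
    · rintro ⟨y, ⟨hy, hterm⟩, rfl⟩
      exact ⟨(upNbrIn_coe_iff u y).2 hy, (terminalIn_coe_iff y).2 hterm⟩
  have hdel : (TerminalIn S x ∧ ∃ u, UpNbrIn S u x ∧
      {y | UpNbrIn S u y ∧ TerminalIn S y}.Infinite) ↔ IsDeleted x := by
    refine and_congr (terminalIn_coe_iff x) ⟨?_, ?_⟩
    · rintro ⟨u, hu, hinf⟩
      refine ⟨⟨u, hu.1⟩, (upNbrIn_coe_iff ⟨u, hu.1⟩ x).1 hu, ?_⟩
      rwa [hset ⟨u, hu.1⟩, Set.infinite_image_iff Subtype.val_injective.injOn] at hinf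
    · rintro ⟨u, hu, hinf⟩
      refine ⟨u, (upNbrIn_coe_iff u x).2 hu, ?_⟩
      rwa [hset, Set.infinite_image_iff Subtype.val_injective.injOn]
  simp only [derStep, Set.mem_sdiff, Subtype.coe_prop, true_and, Set.mem_ofPred_eq, hdel]

lemma mem_derStep_univ_iff (x : P) : x ∈ derStep Set.univ ↔ ¬IsDeleted x :=
  (mem_derStep_iff (⟨x, trivial⟩ : (Set.univ : Set P))).trans
    (isDeleted_apply_iff (OrderIso.Set.univ (α := P)) ⟨x, trivial⟩).symm.not

end Covers

section Congr

variable {P Q : Type*} [PartialOrder P] [PartialOrder Q] {S : Set P} {T : Set Q}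

lemma coe_apply_mem_derStep_iff (f : S ≃o T) (x : S) : ↑(f x) ∈ derStep T ↔ ↑x ∈ derStep S := by
  rw [mem_derStep_iff, mem_derStep_iff, isDeleted_apply_iff f]

def univCongr (e : P ≃o Q) : (Set.univ : Set P) ≃o (Set.univ : Set Q) :=
  OrderIso.Set.univ.trans (e.trans OrderIso.Set.univ.symm)

def derStepCongr (f : S ≃o T) : derStep S ≃o derStep T where
  toFun x := ⟨f ⟨x, x.2.1⟩, (coe_apply_mem_derStep_iff f _).2 x.2⟩
  invFun y := ⟨f.symm ⟨y, y.2.1⟩, by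
    rw [← coe_apply_mem_derStep_iff f, f.apply_symm_apply]
    exact y.2⟩
  left_inv x := by simp
  right_inv y := by simp
  map_rel_iff' := by simp

lemma derIter_zero (S : Set P) : derIter S 0 = S :=
  Ordinal.limitRecOn_zero _ _ _

lemma derIter_add_one (S : Set P) (β : Ordinal) : derIter S (β + 1) = derStep (derIter S β) :=
  Ordinal.limitRecOn_add_one _ _ _ _

end Congr
end Paper

section SigmaOrder

variable {ι : Type*} {α β : ι → Type*} [∀ i, PartialOrder (α i)] [∀ i, PartialOrder (β i)]

namespace Sigma

lemma mk_covBy_mk_iff {i : ι} {a b : α i} : (⟨i, a⟩ : Sigma α) ⋖ ⟨i, b⟩ ↔ a ⋖ b := by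
  refine ⟨fun h => ⟨mk_lt_mk_iff.1 h.lt, fun c hac hcb => h.2 (mk_lt_mk_iff.2 hac)
    (mk_lt_mk_iff.2 hcb)⟩, fun h => ⟨mk_lt_mk_iff.2 h.lt, ?_⟩⟩
  rintro ⟨j, c⟩ ⟨_, _, _, hac⟩ hcb
  exact h.2 hac (mk_lt_mk_iff.1 hcb)

lemma isMin_mk_iff {i : ι} {a : α i} : IsMin (⟨i, a⟩ : Sigma α) ↔ IsMin a := by
  refine ⟨fun h b hb => mk_le_mk_iff.1 (h (mk_le_mk_iff.2 hb)), ?_⟩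
  rintro h ⟨j, b⟩ ⟨_, _, _, hb⟩
  exact mk_le_mk_iff.2 (h hb)

end Sigma

def OrderEmbedding.sigmaMap (f : ∀ i, α i ↪o β i) : Sigma α ↪o Sigma β :=
  OrderEmbedding.ofMapLEIff (fun p => ⟨p.1, f p.1 p.2⟩) <| by
    rintro ⟨i, a⟩ ⟨j, b⟩
    refine ⟨fun h => ?_, ?_⟩
    · obtain ⟨_, _, _, h⟩ := h
      exact Sigma.mk_le_mk_iff.2 ((f _).le_iff_le.1 h)
    · rintro ⟨_, _, _, h⟩
      exact Sigma.mk_le_mk_iff.2 ((f _).le_iff_le.2 h)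

def OrderIso.sigmaCongrRight (e : ∀ i, α i ≃o β i) : Sigma α ≃o Sigma β where
  toEquiv := Equiv.sigmaCongrRight fun i => (e i).toEquiv
  map_rel_iff' {a b} :=
    (OrderEmbedding.sigmaMap fun i => (e i).toOrderEmbedding).map_rel_iff (a := a) (b := b)

end SigmaOrder

namespace Paper

section Copies

variable {ι Q : Type*} [PartialOrder Q]

lemma isTerminal_sigma_mk_iff {α : ι → Type*} [∀ i, PartialOrder (α i)] {i : ι} {a : α i} :
    IsTerminal (⟨i, a⟩ : Sigma α) ↔ IsTerminal a := by
  refine ⟨fun h b hb => h ⟨i, b⟩ (Sigma.mk_covBy_mk_iff.2 hb), ?_⟩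
  rintro h ⟨j, b⟩ hab
  obtain rfl : i = j := (Sigma.lt_def.1 hab.lt).1
  exact h b (Sigma.mk_covBy_mk_iff.1 hab)

lemma isTerminal_coe_iff {a : Q} : IsTerminal (a : WithBot Q) ↔ IsTerminal a := by
  refine ⟨fun h b hb => h b (WithBot.coe_covBy_coe.2 hb), fun h y hy => ?_⟩
  induction y using WithBot.recBotCoe with
  | bot => exact not_lt_bot hy.lt
  | coe b => exact h b (WithBot.coe_covBy_coe.1 hy)

lemma isTerminal_coe_mk_iff {i : ι} {a : Q} :
    IsTerminal (↑(⟨i, a⟩ : Σ _ : ι, Q) : WithBot (Σ _ : ι, Q)) ↔ IsTerminal a :=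
  isTerminal_coe_iff.trans isTerminal_sigma_mk_iff

lemma setOf_coe_mk_covBy_isTerminal (i : ι) (b : Q) :
    {y : WithBot (Σ _ : ι, Q) | ↑(⟨i, b⟩ : Σ _ : ι, Q) ⋖ y ∧ IsTerminal y} =
      (fun c => ↑(⟨i, c⟩ : Σ _ : ι, Q)) '' {c | b ⋖ c ∧ IsTerminal c} := by
  ext y
  induction y using WithBot.recBotCoe with
  | bot => simp
  | coe q =>
    obtain ⟨j, c⟩ := q
    constructor
    · rintro ⟨hcov, hterm⟩
      obtain rfl : i = j := (Sigma.lt_def.1 (WithBot.coe_lt_coe.1 hcov.lt)).1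
      exact ⟨c, ⟨Sigma.mk_covBy_mk_iff.1 (WithBot.coe_covBy_coe.1 hcov),
        isTerminal_coe_mk_iff.1 hterm⟩, rfl⟩
    · rintro ⟨c, ⟨hcov, hterm⟩, hc⟩
      rw [← hc]
      exact ⟨WithBot.coe_covBy_coe.2 (Sigma.mk_covBy_mk_iff.2 hcov), isTerminal_coe_mk_iff.2 hterm⟩

lemma isDeleted_coe_mk_iff [Infinite ι] {i : ι} {a : Q} :
    IsDeleted (↑(⟨i, a⟩ : Σ _ : ι, Q) : WithBot (Σ _ : ι, Q)) ↔
      IsDeleted a ∨ IsMin a ∧ IsTerminal a := by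
  have hinj : Function.Injective fun c : Q => (↑(⟨i, c⟩ : Σ _ : ι, Q) : WithBot (Σ _ : ι, Q)) :=
    fun c d h => sigma_mk_injective (WithBot.coe_injective h)
  constructor
  · rintro ⟨hterm, u, hu, hinf⟩
    rw [isTerminal_coe_mk_iff] at hterm
    induction u using WithBot.recBotCoe with
    | bot => exact Or.inr ⟨Sigma.isMin_mk_iff.1 (WithBot.bot_covBy_coe.1 hu), hterm⟩
    | coe q =>
      obtain ⟨j, b⟩ := q
      obtain rfl : j = i := (Sigma.lt_def.1 (WithBot.coe_lt_coe.1 hu.lt)).1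
      rw [setOf_coe_mk_covBy_isTerminal, Set.infinite_image_iff hinj.injOn] at hinf
      exact Or.inl ⟨hterm, b, Sigma.mk_covBy_mk_iff.1 (WithBot.coe_covBy_coe.1 hu), hinf⟩
  · rintro (⟨hterm, b, hb, hinf⟩ | ⟨hmin, hterm⟩)
    · refine ⟨isTerminal_coe_mk_iff.2 hterm, ↑(⟨i, b⟩ : Σ _ : ι, Q),
        WithBot.coe_covBy_coe.2 (Sigma.mk_covBy_mk_iff.2 hb), ?_⟩
      rwa [setOf_coe_mk_covBy_isTerminal, Set.infinite_image_iff hinj.injOn]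
    · have hbot (j : ι) : (⊥ : WithBot (Σ _ : ι, Q)) ⋖ ↑(⟨j, a⟩ : Σ _ : ι, Q) :=
        WithBot.bot_covBy_coe.2 (Sigma.isMin_mk_iff.2 hmin)
      refine ⟨isTerminal_coe_mk_iff.2 hterm, ⊥, hbot i, ?_⟩
      exact Set.infinite_of_injective_forall_mem
        (f := fun j : ι => (↑(⟨j, a⟩ : Σ _ : ι, Q) : WithBot (Σ _ : ι, Q)))
        (fun j k h => congrArg Sigma.fst (WithBot.coe_injective h))
        fun j => ⟨hbot j, isTerminal_coe_mk_iff.2 hterm⟩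

end Copies

section WithBotSigma

variable {ι Q : Type*} [PartialOrder Q]

variable (ι) in
def withBotSigmaSubtype (s : Set Q) : WithBot (Σ _ : ι, s) ↪o WithBot (Σ _ : ι, Q) :=
  OrderEmbedding.withBotMap (OrderEmbedding.sigmaMap fun _ => OrderEmbedding.subtype (· ∈ s))

lemma coe_mk_mem_range_withBotSigmaSubtype {s : Set Q} {i : ι} {a : Q} :
    ↑(⟨i, a⟩ : Σ _ : ι, Q) ∈ Set.range (withBotSigmaSubtype ι s) ↔ a ∈ s := by
  refine ⟨fun ⟨y, hy⟩ => ?_, fun ha => ⟨↑(⟨i, ⟨a, ha⟩⟩ : Σ _ : ι, s), rfl⟩⟩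
  induction y using WithBot.recBotCoe with
  | bot => exact absurd hy WithBot.bot_ne_coe
  | coe q =>
    obtain ⟨j, c⟩ := q
    cases WithBot.coe_injective hy
    exact c.2

variable [Infinite ι]

lemma derStep_univ_withBot_sigma_of_subsingleton [Subsingleton Q] :
    derStep (Set.univ : Set (WithBot (Σ _ : ι, Q))) = {⊥} := by
  ext x
  induction x using WithBot.recBotCoe with
  | bot => simpa [mem_derStep_univ_iff] using not_isDeleted_of_isMin isMin_bot
  | coe p =>
    obtain ⟨i, a⟩ := p
    simp only [mem_derStep_univ_iff, isDeleted_coe_mk_iff, Set.mem_singleton_iff,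
      WithBot.coe_ne_bot, iff_false, not_not]
    exact Or.inr ⟨Subsingleton.isMin a, fun b hab => hab.lt.ne (Subsingleton.elim a b)⟩

lemma derStep_univ_withBot_sigma (h : ∀ a : Q, IsMin a → ¬IsTerminal a) :
    derStep (Set.univ : Set (WithBot (Σ _ : ι, Q))) =
      Set.range (withBotSigmaSubtype ι (derStep Set.univ)) := by
  ext x
  induction x using WithBot.recBotCoe with
  | bot =>
    exact iff_of_true ((mem_derStep_univ_iff _).2 (not_isDeleted_of_isMin isMin_bot)) ⟨⊥, rfl⟩
  | coe p =>
    obtain ⟨i, a⟩ := p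
    rw [mem_derStep_univ_iff, isDeleted_coe_mk_iff, coe_mk_mem_range_withBotSigmaSubtype,
      mem_derStep_univ_iff]
    exact not_congr (or_iff_left fun hmin => h a hmin.1 hmin.2)

def derStepUnivWithBotSigmaIso (h : ∀ a : Q, IsMin a → ¬IsTerminal a) :
    derStep (Set.univ : Set (WithBot (Σ _ : ι, Q))) ≃o
      WithBot (Σ _ : ι, derStep (Set.univ : Set Q)) :=
  (OrderIso.setCongr _ _ (derStep_univ_withBot_sigma h)).trans OrderEmbedding.orderIso.symm

end WithBotSigma

section Family

variable {ι : Type*} {F : ℕ → Type*} [∀ m, PartialOrder (F m)] [Unique (F 0)]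
  (hsucc : ∀ m, Nonempty (F (m + 1) ≃o WithBot (Σ _ : ι, F m)))
include hsucc

lemma exists_isMin : ∀ m, ∃ a : F m, IsMin a
  | 0 => ⟨default, Subsingleton.isMin _⟩
  | m + 1 =>
    let ⟨e⟩ := hsucc m
    ⟨e.symm ⊥, e.symm.isMin_apply.2 isMin_bot⟩

variable [Infinite ι]

lemma not_isTerminal_of_isMin (m : ℕ) (a : F (m + 1)) (ha : IsMin a) : ¬IsTerminal a := by
  obtain ⟨e⟩ := hsucc m
  obtain ⟨c, hc⟩ := exists_isMin hsucc m
  have hroot : (⊥ : WithBot (Σ _ : ι, F m)) ⋖ ↑(⟨Classical.arbitrary ι, c⟩ : Σ _ : ι, F m) :=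
    WithBot.bot_covBy_coe.2 (Sigma.isMin_mk_iff.2 hc)
  rw [← isTerminal_apply_iff e, isMin_iff_eq_bot.1 (e.isMin_apply.2 ha)]
  exact fun hterm => hterm _ hroot

lemma nonempty_derStep_univ_succ_orderIso (m : ℕ) :
    Nonempty (derStep (Set.univ : Set (F (m + 1))) ≃o F m) := by
  induction m with
  | zero =>
    obtain ⟨e⟩ := hsucc 0
    exact ⟨(derStepCongr (univCongr e)).trans <|
      (OrderIso.setCongr _ _ derStep_univ_withBot_sigma_of_subsingleton).trans
        (OrderIso.ofUnique _ _)⟩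
  | succ m ih =>
    obtain ⟨g⟩ := ih
    obtain ⟨e⟩ := hsucc (m + 1)
    obtain ⟨e'⟩ := hsucc m
    exact ⟨(derStepCongr (univCongr e)).trans <|
      (derStepUnivWithBotSigmaIso (not_isTerminal_of_isMin hsucc m)).trans <|
      (OrderIso.sigmaCongrRight fun _ => g).withBotCongr.trans e'.symm⟩

lemma nonempty_derIter_univ_orderIso {n k : ℕ} (hkn : k ≤ n) :
    Nonempty (derIter (Set.univ : Set (F n)) k ≃o F (n - k)) := by
  induction k with
  | zero => rw [Nat.cast_zero, derIter_zero]; exact ⟨OrderIso.Set.univ⟩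
  | succ j ih =>
    obtain ⟨g⟩ := ih (by omega)
    obtain ⟨m, hm⟩ : ∃ m, n - j = m + 1 := ⟨n - (j + 1), by omega⟩
    rw [hm] at g
    obtain ⟨h⟩ := nonempty_derStep_univ_succ_orderIso hsucc m
    rw [Nat.cast_succ, derIter_add_one, show n - (j + 1) = m by omega]
    exact ⟨(derStepCongr (g.trans OrderIso.Set.univ.symm)).trans h⟩

end Family

theorem statement4
    (V : Ordinal → Type) [∀ γ : Ordinal, PartialOrder (V γ)]
    (seq : Ordinal → ℕ → Ordinal)
    (hV0 : ∀ x y : V 0, x = y) (hV0ne : Nonempty (V 0))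
    (hchainfin : ∀ γ : Ordinal, γ.card ≤ Cardinal.aleph0 → ∀ x : V γ, {y : V γ | y ≤ x}.Finite)
    (hchainlin : ∀ γ : Ordinal, γ.card ≤ Cardinal.aleph0 →
      ∀ x y w : V γ, y ≤ x → w ≤ x → y ≤ w ∨ w ≤ y)
    (hseqmono : ∀ γ : Ordinal, γ.card ≤ Cardinal.aleph0 → Order.IsSuccLimit γ → StrictMono (seq γ))
    (hseqsucc : ∀ γ : Ordinal, γ.card ≤ Cardinal.aleph0 → Order.IsSuccLimit γ →
      ∀ n : ℕ, ∃ δ : Ordinal, seq γ n = δ + 1)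
    (hseqlt : ∀ γ : Ordinal, γ.card ≤ Cardinal.aleph0 → Order.IsSuccLimit γ → ∀ n : ℕ, seq γ n < γ)
    (hseqcof : ∀ γ : Ordinal, γ.card ≤ Cardinal.aleph0 → Order.IsSuccLimit γ →
      ∀ δ : Ordinal, δ < γ → ∃ n : ℕ, δ < seq γ n)
    (hsucc : ∀ γ : Ordinal, γ.card ≤ Cardinal.aleph0 → (γ = 0 ∨ ∃ δ : Ordinal, γ = δ + 1) →
      Nonempty (V (γ + 1) ≃o WithBot (Σ _ : ℕ, V γ)))
    (hlimsucc : ∀ γ : Ordinal, γ.card ≤ Cardinal.aleph0 → Order.IsSuccLimit γ →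
      Nonempty (V (γ + 1) ≃o WithBot (V γ)))
    (hlim : ∀ γ : Ordinal, γ.card ≤ Cardinal.aleph0 → Order.IsSuccLimit γ →
      Nonempty (V γ ≃o (Σ n : ℕ, V (seq γ n))))
    (n k : ℕ) (h1 : 1 ≤ k) (hkn : k ≤ n) :
    Nonempty (↥(derIter (Set.univ : Set (V (n : Ordinal))) (k : Ordinal))
      ≃o V ((n - k : ℕ) : Ordinal)) := by
  have : Unique (V ((0 : ℕ) : Ordinal)) := by
    rw [Nat.cast_zero]
    exact { default := hV0ne.some, uniq := fun x => hV0 x _ }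
  have hsuccNat (m : ℕ) : Nonempty (V ((m + 1 : ℕ) : Ordinal) ≃o WithBot (Σ _ : ℕ, V m)) := by
    have hcard : (m : Ordinal).card ≤ Cardinal.aleph0 := by
      rw [Ordinal.card_nat]
      exact Cardinal.natCast_lt_aleph0.le
    have hsucc_or_zero : (m : Ordinal) = 0 ∨ ∃ δ : Ordinal, (m : Ordinal) = δ + 1 := by
      cases m with
      | zero => exact Or.inl Nat.cast_zero
      | succ j => exact Or.inr ⟨j, Nat.cast_succ j⟩
    rw [Nat.cast_succ]
    exact hsucc m hcard hsucc_or_zero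
  exact nonempty_derIter_univ_orderIso (F := fun m : ℕ => V m) hsuccNat hkn

end Paper
end
end
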